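/- arXiv:math/0407042 — 3 statements merged into one kernel-verified Lean document; each statement's English description precedes it below -/
import Mathlib

section
/- With f_0 = n^r, f_1 = r·n^r, f_2 = (5/4)r·n^r - (3/4)n^r + r·n^{r-1}, f_3 = (1/4)r·n^r - (1/2)n^r + r·n^{r-1}, f_{03} = 4r·n^r - 4n^r, the fatness F = (f_1 + f_2 - 20)/(f_0 + f_3 - 10) tends to 9 and the complexity C = f_{03}/(f_0 + f_3 - 10) tends to 16 as n and r tend to infinity. Precisely: for every ε > 0 there exist n, r (n ≥ 4 even, r ≥ 2) with F > 9 - ε and C > 16 - ε. -/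
/-!
On the diagonal `n = r = m` one has `r * n ^ (r - 1) = n ^ r =: x`, and the fatness and complexity
become `((9m + 1)/4 * x - 20) / ((m/4 + 3/2) * x - 10)` and `4(m - 1) * x / ((m/4 + 3/2) * x - 10)`.
Their distances to 9 and 16 are `(53x/4 - 70) / D` and `(28x - 160) / D`, where the denominator
`D` exceeds `m x / 4`; so they are below `53/m` and `112/m`, and any even `m > 112/ε` works.
-/

noncomputable section

def fatness (n r : ℕ) : ℝ :=
  ((r:ℝ) * (n:ℝ) ^ r
      + ((5/4) * (r:ℝ) * (n:ℝ) ^ r - (3/4) * (n:ℝ) ^ r + (r:ℝ) * (n:ℝ) ^ (r - 1))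
      - 20)
    / ((n:ℝ) ^ r
      + ((1/4) * (r:ℝ) * (n:ℝ) ^ r - (1/2) * (n:ℝ) ^ r + (r:ℝ) * (n:ℝ) ^ (r - 1))
      - 10)

def complexity (n r : ℕ) : ℝ :=
  (4 * (r:ℝ) * (n:ℝ) ^ r - 4 * (n:ℝ) ^ r)
    / ((n:ℝ) ^ r
      + ((1/4) * (r:ℝ) * (n:ℝ) ^ r - (1/2) * (n:ℝ) ^ r + (r:ℝ) * (n:ℝ) ^ (r - 1))
      - 10)

end

lemma fatness_self {m : ℕ} (hm : m ≠ 0) :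
    fatness m m = ((9 * m / 4 + 1 / 4) * (m:ℝ) ^ m - 20) / ((m / 4 + 3 / 2) * (m:ℝ) ^ m - 10) := by
  rw [fatness, mul_pow_sub_one hm]
  ring

lemma complexity_self {m : ℕ} (hm : m ≠ 0) :
    complexity m m = 4 * (m - 1) * (m:ℝ) ^ m / ((m / 4 + 3 / 2) * (m:ℝ) ^ m - 10) := by
  rw [complexity, mul_pow_sub_one hm]
  ring

section Bounds

variable {m x : ℝ}

lemma lt_diagonal_denominator_div (hm : 0 < m) (hx : 7 ≤ x) :
    x / 4 < ((m / 4 + 3 / 2) * x - 10) / m := by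
  rw [lt_div_iff₀ hm]
  nlinarith

lemma nine_sub_lt_diagonal_fatness (hm : 0 < m) (hx : 7 ≤ x) :
    9 - 53 / m < ((9 * m / 4 + 1 / 4) * x - 20) / ((m / 4 + 3 / 2) * x - 10) := by
  have hD := lt_diagonal_denominator_div hm hx
  have hDpos : 0 < (m / 4 + 3 / 2) * x - 10 := by nlinarith
  rw [lt_div_iff₀ hDpos]
  have hsplit : (9 - 53 / m) * ((m / 4 + 3 / 2) * x - 10)
      = 9 * ((m / 4 + 3 / 2) * x - 10) - 53 * (((m / 4 + 3 / 2) * x - 10) / m) := by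
    ring
  linarith

lemma sixteen_sub_lt_diagonal_complexity (hm : 0 < m) (hx : 7 ≤ x) :
    16 - 112 / m < 4 * (m - 1) * x / ((m / 4 + 3 / 2) * x - 10) := by
  have hD := lt_diagonal_denominator_div hm hx
  have hDpos : 0 < (m / 4 + 3 / 2) * x - 10 := by nlinarith
  rw [lt_div_iff₀ hDpos]
  have hsplit : (16 - 112 / m) * ((m / 4 + 3 / 2) * x - 10)
      = 16 * ((m / 4 + 3 / 2) * x - 10) - 112 * (((m / 4 + 3 / 2) * x - 10) / m) := by
    ring
  linarith

end Bounds

/-- Fatness approaches 9 and complexity approaches 16 for the projected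
products of polygons. -/
theorem fatness_complexity_unbounded (ε : ℝ) (hε : 0 < ε) :
    ∃ (n r : ℕ), 4 ≤ n ∧ Even n ∧ 2 ≤ r ∧
      (((r:ℝ) * (n:ℝ) ^ r
          + ((5/4) * (r:ℝ) * (n:ℝ) ^ r - (3/4) * (n:ℝ) ^ r + (r:ℝ) * (n:ℝ) ^ (r - 1))
          - 20)
        / ((n:ℝ) ^ r
          + ((1/4) * (r:ℝ) * (n:ℝ) ^ r - (1/2) * (n:ℝ) ^ r + (r:ℝ) * (n:ℝ) ^ (r - 1))
          - 10)
        > 9 - ε) ∧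
      ((4 * (r:ℝ) * (n:ℝ) ^ r - 4 * (n:ℝ) ^ r)
        / ((n:ℝ) ^ r
          + ((1/4) * (r:ℝ) * (n:ℝ) ^ r - (1/2) * (n:ℝ) ^ r + (r:ℝ) * (n:ℝ) ^ (r - 1))
          - 10)
        > 16 - ε) := by
  obtain ⟨k, hk⟩ := exists_nat_gt (112 / ε)
  set m := 2 * (k + 4)
  have hkm : (k : ℝ) + 8 ≤ m := by
    push_cast [m]
    linarith [k.cast_nonneg (α := ℝ)]
  have hm0 : (0 : ℝ) < m := by linarith [k.cast_nonneg (α := ℝ)]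
  have hmε : 112 / (m : ℝ) < ε := by
    rw [div_lt_iff₀ hε] at hk
    rw [div_lt_iff₀ hm0]
    nlinarith
  have hx : (7 : ℝ) ≤ (m : ℝ) ^ m := by
    linarith [le_self_pow₀ (by linarith : (1 : ℝ) ≤ m) (by omega : m ≠ 0)]
  refine ⟨m, m, by omega, even_two_mul _, by omega, ?_, ?_⟩
  · change fatness m m > 9 - ε
    rw [fatness_self (by omega)]
    linarith [nine_sub_lt_diagonal_fatness hm0 hx,
      div_le_div_of_nonneg_right (by norm_num : (53 : ℝ) ≤ 112) hm0.le]
  · change complexity m m > 16 - ε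
    rw [complexity_self (by omega)]
    linarith [sixteen_sub_lt_diagonal_complexity hm0 hx]
end

section
/- For a finite set of vectors v_1, ..., v_k in ℝ^d, the following are equivalent: (i) every x ∈ ℝ^d is a non-negative linear combination of the v_i; (ii) every x ∈ ℝ^d is a positive linear combination of the v_i; (iii) the v_i span ℝ^d and 0 is a linear combination of the v_i with all coefficients strictly positive. -/
/-!
Nonnegative spanning gives a positive relation: writing each `-v i` as a nonnegative combination
and adding `∑ v i`, the coefficients are all at least one and the sum is zero. Conversely, a
positive relation `∑ lam i • v i = 0` can be added with an arbitrarily large multiplier to any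
linear representation `∑ c i • v i = x`, which makes all coefficients positive.
-/

open Filter Finset

section PositiveSpanning

variable {𝕜 : Type*} [Field 𝕜] [LinearOrder 𝕜] [IsStrictOrderedRing 𝕜]
  {ι : Type*} [Fintype ι] {M : Type*} [AddCommGroup M] [Module 𝕜 M]

theorem exists_forall_pos_add_mul (c : ι → 𝕜) {lam : ι → 𝕜} (hlam : ∀ i, 0 < lam i) :
    ∃ t : 𝕜, ∀ i, 0 < c i + t * lam i := by
  have hlarge : ∀ i, ∀ᶠ t in atTop, 0 < c i + t * lam i := fun i =>
    (tendsto_atTop_add_const_left atTop (c i)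
      (tendsto_id.atTop_mul_const (hlam i))).eventually_gt_atTop 0
  exact (eventually_all.2 hlarge).exists

theorem exists_pos_sum_smul_eq_of_sum_smul_eq_zero {v : ι → M} {lam : ι → 𝕜}
    (hlam : ∀ i, 0 < lam i) (hzero : ∑ i, lam i • v i = 0) {c : ι → 𝕜} {x : M}
    (hc : ∑ i, c i • v i = x) :
    ∃ mu : ι → 𝕜, (∀ i, 0 < mu i) ∧ ∑ i, mu i • v i = x := by
  obtain ⟨t, ht⟩ := exists_forall_pos_add_mul c hlam
  refine ⟨fun i => c i + t * lam i, ht, ?_⟩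
  calc ∑ i, (c i + t * lam i) • v i = ∑ i, c i • v i + t • ∑ i, lam i • v i := by
        simp only [add_smul, mul_smul, sum_add_distrib, smul_sum]
    _ = x := by rw [hc, hzero, smul_zero, add_zero]

theorem exists_pos_sum_smul_eq_zero_of_forall_nonneg {v : ι → M}
    (h : ∀ x : M, ∃ lam : ι → 𝕜, (∀ i, 0 ≤ lam i) ∧ ∑ i, lam i • v i = x) :
    ∃ lam : ι → 𝕜, (∀ i, 0 < lam i) ∧ ∑ i, lam i • v i = 0 := by
  choose mu hmu hsum using fun j => h (-v j)
  refine ⟨fun i => 1 + ∑ j, mu j i,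
    fun i => add_pos_of_pos_of_nonneg one_pos (sum_nonneg fun j _ => hmu j i), ?_⟩
  calc ∑ i, (1 + ∑ j, mu j i) • v i = ∑ i, v i + ∑ j, ∑ i, mu j i • v i := by
        simp only [add_smul, one_smul, sum_smul, sum_add_distrib]
        rw [sum_comm]
    _ = 0 := by simp only [hsum, sum_neg_distrib, add_neg_cancel]

end PositiveSpanning

/-- Equivalence of the three characterizations of a positively spanning
family of vectors v : Fin k → ℝ^d. -/
theorem positively_spanning_tfae (d k : ℕ) (v : Fin k → (Fin d → ℝ)) :
    List.TFAE
      [ ∀ x : Fin d → ℝ, ∃ lam : Fin k → ℝ,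
          (∀ i, 0 ≤ lam i) ∧ ∑ i, lam i • v i = x,
        ∀ x : Fin d → ℝ, ∃ lam : Fin k → ℝ,
          (∀ i, 0 < lam i) ∧ ∑ i, lam i • v i = x,
        Submodule.span ℝ (Set.range v) = ⊤ ∧
          ∃ lam : Fin k → ℝ, (∀ i, 0 < lam i) ∧ ∑ i, lam i • v i = 0 ] := by
  tfae_have 2 → 1 := fun h x =>
    let ⟨lam, hpos, hsum⟩ := h x
    ⟨lam, fun i => (hpos i).le, hsum⟩
  tfae_have 1 → 3 := by
    intro h
    refine ⟨Submodule.eq_top_iff'.2 fun x => ?_, exists_pos_sum_smul_eq_zero_of_forall_nonneg h⟩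
    obtain ⟨lam, -, hsum⟩ := h x
    exact (Submodule.mem_span_range_iff_exists_fun ℝ).2 ⟨lam, hsum⟩
  tfae_have 3 → 2 := by
    rintro ⟨hspan, lam, hlam, hzero⟩ x
    obtain ⟨c, hc⟩ := (Submodule.mem_span_range_iff_exists_fun ℝ).1 (hspan ▸ Submodule.mem_top)
    exact exists_pos_sum_smul_eq_of_sum_smul_eq_zero hlam hzero hc
  tfae_finish
end

section
/- Let π : ℝ^{e+d} → ℝ^d be the projection to the last d coordinates, P ⊂ ℝ^{e+d} a full-dimensional polytope, and G a face of P. If the first-e-coordinate truncations n' of the outer normal vectors n_F = (n', n'') of the facets F of P containing G positively span ℝ^e, then π(G) is a face of π(P), the map G → π(G) is a bijection, and π^{-1}(π(G)) ∩ P = G. -/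
/-!
Positive spanning gives weights `μ i > 0` (`i ∈ S`) with `∑ μ i • n'_i = 0`. The functional
`∑ μ i ⟨n_i, ·⟩` then only depends on the last `d` coordinates, where it is `⟨c, ·⟩` with
`c = ∑ μ i • n''_i`; it is bounded on `P` by `∑ μ i b_i`, with equality exactly on `G`.
So `G` is the preimage of the face of `π(P)` maximizing `c`. Injectivity of `π` on `G` holds
because the `n'_i` (`i ∈ S`) span `ℝ^e`, so the equations of `G` fix the first `e` coordinates
once the last `d` are known.
-/

open Finset

/-- Scalar product on ℝ^e × ℝ^d. -/
def dotProd {e d : ℕ} (n x : (Fin e → ℝ) × (Fin d → ℝ)) : ℝ :=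
  ∑ i, n.1 i * x.1 i + ∑ j, n.2 j * x.2 j

open Set

/-- The subfamily `(v i)_{i ∈ S}` positively spans `V`. -/
def PositivelySpans {ι V : Type*} [Fintype ι] [AddCommMonoid V] [Module ℝ V]
    (v : ι → V) (S : Finset ι) : Prop :=
  ∀ y : V, ∃ lam : ι → ℝ, (∀ i, 0 ≤ lam i) ∧ (∀ i ∉ S, lam i = 0) ∧ ∑ i, lam i • v i = y

namespace PositivelySpans

variable {ι : Type*} [Fintype ι] {S : Finset ι}

theorem exists_pos_sum_smul_eq_zero {V : Type*} [AddCommGroup V] [Module ℝ V] {v : ι → V}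
    (h : PositivelySpans v S) : ∃ μ : ι → ℝ, (∀ i ∈ S, 0 < μ i) ∧ ∑ i ∈ S, μ i • v i = 0 := by
  obtain ⟨lam, hlam, hlamS, hsum⟩ := h (-∑ i ∈ S, v i)
  rw [← Finset.sum_subset (Finset.subset_univ S) fun i _ hi => by rw [hlamS i hi, zero_smul]]
    at hsum
  refine ⟨fun i => lam i + 1, fun i _ => by linarith [hlam i], ?_⟩
  simp only [add_smul, one_smul, Finset.sum_add_distrib, hsum, neg_add_cancel]

theorem eq_of_forall_dotProduct_eq {n : Type*} [Fintype n] {v : ι → n → ℝ}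
    (h : PositivelySpans v S) {u w : n → ℝ} (huw : ∀ i ∈ S, v i ⬝ᵥ u = v i ⬝ᵥ w) : u = w := by
  obtain ⟨lam, -, hlamS, hsum⟩ := h (u - w)
  have hzero : (u - w) ⬝ᵥ (u - w) = 0 := by
    conv_lhs => arg 1; rw [← hsum]
    rw [sum_dotProduct]
    refine Finset.sum_eq_zero fun i _ => ?_
    by_cases hi : i ∈ S
    · rw [smul_dotProduct, dotProduct_sub, huw i hi, sub_self, smul_zero]
    · rw [hlamS i hi, zero_smul, zero_dotProduct]
  exact sub_eq_zero.mp (dotProduct_self_eq_zero.mp hzero)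

end PositivelySpans

theorem Finset.sum_mul_eq_sum_mul_iff_of_le {ι : Type*} {s : Finset ι} {μ f g : ι → ℝ}
    (hμ : ∀ i ∈ s, 0 < μ i) (hfg : ∀ i ∈ s, f i ≤ g i) :
    ∑ i ∈ s, μ i * f i = ∑ i ∈ s, μ i * g i ↔ ∀ i ∈ s, f i = g i := by
  rw [Finset.sum_eq_sum_iff_of_le fun i hi => mul_le_mul_of_nonneg_left (hfg i hi) (hμ i hi).le]
  exact forall₂_congr fun i hi => mul_right_inj' (hμ i hi).ne'

theorem Set.image_eq_maximizers_of_eq_setOf {X Y : Type*} {π : X → Y} {ψ : Y → ℝ} {β : ℝ}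
    {P G : Set X} (hle : ∀ x ∈ P, ψ (π x) ≤ β) (hG : G = {x ∈ P | ψ (π x) = β})
    (hne : G.Nonempty) : π '' G = {y ∈ π '' P | ∀ z ∈ π '' P, ψ z ≤ ψ y} := by
  obtain ⟨g, hgP, hg⟩ := hG ▸ hne
  subst hG
  ext y
  constructor
  · rintro ⟨x, ⟨hxP, hx⟩, rfl⟩
    exact ⟨⟨x, hxP, rfl⟩, by rintro _ ⟨w, hwP, rfl⟩; linarith [hle w hwP]⟩
  · rintro ⟨⟨x, hxP, rfl⟩, hmax⟩
    have := hmax _ ⟨g, hgP, rfl⟩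
    exact ⟨x, ⟨hxP, le_antisymm (hle x hxP) (by linarith)⟩, rfl⟩

theorem Set.preimage_image_inter_eq_of_eq_setOf {X Y : Type*} {π : X → Y} {ψ : Y → ℝ} {β : ℝ}
    {P G : Set X} (hG : G = {x ∈ P | ψ (π x) = β}) : π ⁻¹' (π '' G) ∩ P = G := by
  subst hG
  ext x
  constructor
  · rintro ⟨⟨w, ⟨-, hw⟩, hwx⟩, hxP⟩
    exact ⟨hxP, hwx ▸ hw⟩
  · intro hx
    exact ⟨⟨x, hx, rfl⟩, hx.1⟩

section dotProd

variable {e d m : ℕ}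

theorem dotProd_eq (n x : (Fin e → ℝ) × (Fin d → ℝ)) :
    dotProd n x = n.1 ⬝ᵥ x.1 + n.2 ⬝ᵥ x.2 := rfl

theorem sum_mul_dotProd (s : Finset (Fin m)) (μ : Fin m → ℝ)
    (N : Fin m → (Fin e → ℝ) × (Fin d → ℝ)) (x : (Fin e → ℝ) × (Fin d → ℝ)) :
    ∑ i ∈ s, μ i * dotProd (N i) x =
      (∑ i ∈ s, μ i • (N i).1) ⬝ᵥ x.1 + (∑ i ∈ s, μ i • (N i).2) ⬝ᵥ x.2 := by
  simp only [dotProd_eq, sum_dotProduct, smul_dotProduct, smul_eq_mul, mul_add,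
    Finset.sum_add_distrib]

theorem injOn_snd_of_positivelySpans {N : Fin m → (Fin e → ℝ) × (Fin d → ℝ)} {b : Fin m → ℝ}
    {S : Finset (Fin m)} (hspan : PositivelySpans (fun i => (N i).1) S) :
    InjOn Prod.snd {x | ∀ i ∈ S, dotProd (N i) x = b i} := by
  intro x hx y hy hxy
  refine Prod.ext (hspan.eq_of_forall_dotProduct_eq fun i hi => ?_) hxy
  have := (hx i hi).trans (hy i hi).symm
  rw [dotProd_eq, dotProd_eq, hxy] at this
  exact add_right_cancel this

end dotProd

theorem strictly_preserved_of_positively_spanning_general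
    (e d m : ℕ)
    (N : Fin m → (Fin e → ℝ) × (Fin d → ℝ)) (b : Fin m → ℝ)
    (P : Set ((Fin e → ℝ) × (Fin d → ℝ)))
    (hP : P = {x | ∀ i, dotProd (N i) x ≤ b i})
    (S : Finset (Fin m))   -- the facets of P containing G
    (G : Set ((Fin e → ℝ) × (Fin d → ℝ)))
    (hG : G = {x ∈ P | ∀ i ∈ S, dotProd (N i) x = b i})
    (hGne : G.Nonempty)
    (hspan : ∀ y : Fin e → ℝ, ∃ lam : Fin m → ℝ,
      (∀ i, 0 ≤ lam i) ∧ (∀ i ∉ S, lam i = 0) ∧ ∑ i, lam i • (N i).1 = y) :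
    (∃ c : Fin d → ℝ,
        Prod.snd '' G =
          {y ∈ Prod.snd '' P | ∀ z ∈ Prod.snd '' P, ∑ j, c j * z j ≤ ∑ j, c j * y j}) ∧
    Set.BijOn Prod.snd G (Prod.snd '' G) ∧
    Prod.snd ⁻¹' (Prod.snd '' G) ∩ P = G := by
  have hspan : PositivelySpans (fun i => (N i).1) S := hspan
  obtain ⟨μ, hμ, hμsum⟩ := hspan.exists_pos_sum_smul_eq_zero
  set c := ∑ i ∈ S, μ i • (N i).2
  have hc : ∀ x, c ⬝ᵥ x.2 = ∑ i ∈ S, μ i * dotProd (N i) x := fun x => by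
    rw [sum_mul_dotProd, hμsum, zero_dotProduct, zero_add]
  have hbound : ∀ x ∈ P, ∀ i ∈ S, dotProd (N i) x ≤ b i := fun x hx i _ => (hP ▸ hx) i
  have hle : ∀ x ∈ P, c ⬝ᵥ x.2 ≤ ∑ i ∈ S, μ i * b i := fun x hx => by
    rw [hc]
    exact Finset.sum_le_sum fun i hi => mul_le_mul_of_nonneg_left (hbound x hx i hi) (hμ i hi).le
  have hG' : G = {x ∈ P | c ⬝ᵥ x.2 = ∑ i ∈ S, μ i * b i} := by
    rw [hG]
    ext x
    refine and_congr_right fun hx => ?_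
    rw [hc, Finset.sum_mul_eq_sum_mul_iff_of_le hμ (hbound x hx)]
  refine ⟨⟨c, image_eq_maximizers_of_eq_setOf hle hG' hGne⟩, ?_,
    preimage_image_inter_eq_of_eq_setOf hG'⟩
  refine InjOn.bijOn_image ((injOn_snd_of_positivelySpans (b := b) hspan).mono ?_)
  rw [hG]
  exact fun x hx => hx.2

/-- If the first-e-coordinate parts of the normals of the facets of P
containing the face G positively span ℝ^e, then G is strictly preserved by
the projection to the last d coordinates: π(G) is a face of π(P), π is a
bijection from G to π(G), and π⁻¹(π(G)) ∩ P = G. -/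
theorem strictly_preserved_of_positively_spanning
    (e d m : ℕ)
    (N : Fin m → (Fin e → ℝ) × (Fin d → ℝ)) (b : Fin m → ℝ)
    (P : Set ((Fin e → ℝ) × (Fin d → ℝ)))
    (hP : P = {x | ∀ i, dotProd (N i) x ≤ b i})
    (hcompact : IsCompact P)
    (hfulldim : (interior P).Nonempty)
    (S : Finset (Fin m))   -- the facets of P containing G
    (hfacet : ∀ i ∈ S, ∃ x ∈ P, dotProd (N i) x = b i)
    (G : Set ((Fin e → ℝ) × (Fin d → ℝ)))
    (hG : G = {x ∈ P | ∀ i ∈ S, dotProd (N i) x = b i})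
    (hGne : G.Nonempty)
    (hspan : ∀ y : Fin e → ℝ, ∃ lam : Fin m → ℝ,
      (∀ i, 0 ≤ lam i) ∧ (∀ i ∉ S, lam i = 0) ∧ ∑ i, lam i • (N i).1 = y) :
    (∃ c : Fin d → ℝ,
        Prod.snd '' G =
          {y ∈ Prod.snd '' P | ∀ z ∈ Prod.snd '' P, ∑ j, c j * z j ≤ ∑ j, c j * y j}) ∧
    Set.BijOn Prod.snd G (Prod.snd '' G) ∧
    Prod.snd ⁻¹' (Prod.snd '' G) ∩ P = G :=
  strictly_preserved_of_positively_spanning_general e d m N b P hP S G hG hGne hspan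
end
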